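/- Let T be a Calderón–Zygmund operator on ℝⁿ with kernel K satisfying |K(x, x + t u)| ≥ c·t^{−n} for some fixed unit vector u, all x ∈ ℝⁿ, and all t ≠ 0, together with the regularity estimate |K(x,s) − K(x,t)| ≤ C_K|s−t|^γ/|x−s|^{n+γ} for |x−s| > 2|s−t|. Then there exists s > 0 such that T is nondegenerate along the direction x₀ = s·u: there is c′ > 0 such that for every ball B of radius r centered anywhere and every nonnegative locally summable f supported on B, |Tf(x)| ≥ c′·f_B for all x ∈ B ± r x₀. -/

import Mathlib

open MeasureTheory Metric Filter
open scoped ENNReal Topology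

noncomputable section

/-- Euclidean space `ℝⁿ` (as a pi type, with Lebesgue measure). -/
abbrev En (n : ℕ) : Type := Fin n → ℝ

/-- Average of `w` over the ball `B(c,r)` with respect to Lebesgue measure. -/
def ballAvg {n : ℕ} (w : En n → ℝ) (c : En n) (r : ℝ) : ℝ :=
  ⨍ y in Metric.ball c r, w y

/-- The (uncentered) Hardy–Littlewood maximal operator: supremum of the averages of `|f|`
over all balls containing `x`. -/
def MHL {n : ℕ} (f : En n → ℝ) (x : En n) : ℝ :=
  ⨆ B : {cr : En n × ℝ // 0 < cr.2 ∧ x ∈ Metric.ball cr.1 cr.2},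
    ⨍ y in Metric.ball B.1.1 B.1.2, |f y|

/-- The Muckenhoupt class `A₁` with constant `C`: `M w ≤ C·w` almost everywhere. -/
def IsA1 {n : ℕ} (w : En n → ℝ) (C : ℝ) : Prop :=
  ∀ᵐ x ∂(volume : Measure (En n)), MHL w x ≤ C * w x

/-- The Muckenhoupt class `A_p` (`1 < p < ∞`) with constant `C`:
`sup_B (avg_B w) · (avg_B w^{-1/(p-1)})^{p-1} ≤ C`. -/
def IsAp {n : ℕ} (w : En n → ℝ) (p C : ℝ) : Prop :=
  ∀ (c : En n) (r : ℝ), 0 < r →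
    ballAvg w c r * (ballAvg (fun y => w y ^ (-1 / (p - 1))) c r) ^ (p - 1) ≤ C

/-- `T` is nondegenerate along the direction `x₀` with constant `c`: for every ball
`B = B(z,r)` and every nonnegative locally summable `f` supported on `B`,
`|Tf(x)| ≥ c·f_B` for all `x ∈ B ± r·x₀`. -/
def NondegAlong {n : ℕ} (T : (En n → ℝ) → (En n → ℝ)) (x₀ : En n) (c : ℝ) : Prop :=
  ∀ (z : En n) (r : ℝ), 0 < r → ∀ f : En n → ℝ, (∀ x, 0 ≤ f x) →
    LocallyIntegrable f volume → (∀ x, x ∉ Metric.ball z r → f x = 0) →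
    ∀ x : En n,
      (x ∈ Metric.ball (z + r • x₀) r ∨ x ∈ Metric.ball (z - r • x₀) r) →
      c * ballAvg f z r ≤ |T f x|

/-! For `x ∈ B(z, r) ± r s u`, the point `y₀ = x ∓ r s u` lies in `B = B(z, r)` at distance
`r s` from `x`. Split `Tf(x) = K(x, y₀) ∫_B f + ∫_B (K(x, y) − K(x, y₀)) f(y) dy`: the first term
has size at least `c (r s)^{-n} ∫_B f`, and since `|y − y₀| < 2r` the regularity of `K` bounds the
second by `C_K 2^γ s^{-γ} (r s)^{-n} ∫_B f`. Choosing `s` with `C_K 2^γ s^{-γ} ≤ c/2` gives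
`|Tf(x)| ≥ (c/2) s^{-n} |B(0, 1)| f_B`. -/

theorem mul_integral_le_abs_integral_mul {α : Type*} [MeasurableSpace α] {μ : Measure α}
    {f g : α → ℝ} {a M : ℝ} (hg : AEStronglyMeasurable g μ) (hf0 : 0 ≤ᵐ[μ] f)
    (hf : Integrable f μ) (hgM : ∀ᵐ y ∂μ, |g y - a| ≤ M) :
    (|a| - M) * ∫ y, f y ∂μ ≤ |∫ y, g y * f y ∂μ| := by
  have hbound : ∀ᵐ y ∂μ, ‖(g y - a) * f y‖ ≤ M * f y := by
    filter_upwards [hf0, hgM] with y hy0 hy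
    rw [Real.norm_eq_abs, abs_mul, abs_of_nonneg hy0]
    exact mul_le_mul_of_nonneg_right hy hy0
  have hint : Integrable (fun y => (g y - a) * f y) μ :=
    (hf.const_mul M).mono' ((hg.sub aestronglyMeasurable_const).mul hf.aestronglyMeasurable) hbound
  have herr : |∫ y, (g y - a) * f y ∂μ| ≤ M * ∫ y, f y ∂μ := by
    rw [← integral_const_mul]; exact norm_integral_le_of_norm_le (hf.const_mul M) hbound
  have hsplit : ∫ y, g y * f y ∂μ = a * ∫ y, f y ∂μ + ∫ y, (g y - a) * f y ∂μ := by
    rw [← integral_const_mul, ← integral_add (hf.const_mul a) hint]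
    congr 1 with y; ring
  have hI : 0 ≤ ∫ y, f y ∂μ := integral_nonneg_of_ae hf0
  have htri := abs_add_le (a * ∫ y, f y ∂μ + ∫ y, (g y - a) * f y ∂μ) (-∫ y, (g y - a) * f y ∂μ)
  rw [add_neg_cancel_right, abs_neg, abs_mul, abs_of_nonneg hI] at htri
  rw [hsplit]
  nlinarith

section HolderKernel

variable {X : Type*} [MetricSpace X] {g : X → ℝ} {x : X} {C γ β : ℝ}

theorem continuousOn_compl_singleton_of_holder (hγ : 0 < γ)
    (hreg : ∀ s t, 2 * dist s t < dist x s → |g s - g t| ≤ C * dist s t ^ γ / dist x s ^ β) :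
    ContinuousOn g {x}ᶜ := by
  intro y (hy : y ≠ x)
  have hxy : 0 < dist x y := dist_pos.2 hy.symm
  refine ContinuousAt.continuousWithinAt (tendsto_iff_norm_sub_tendsto_zero.2 ?_)
  have hbound : Tendsto (fun t => |C| * dist y t ^ γ / dist x y ^ β) (𝓝 y) (𝓝 0) := by
    have hdist : Continuous fun t => dist y t := continuous_const.dist continuous_id
    have := (((hdist.continuousAt (x := y)).rpow_const (Or.inr hγ.le)).const_mul |C|).div_const
      (dist x y ^ β)
    simpa [Real.zero_rpow hγ.ne'] using this.tendsto
  refine squeeze_zero_norm' ?_ hbound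
  filter_upwards [ball_mem_nhds y (half_pos hxy)] with t ht
  rw [norm_norm, Real.norm_eq_abs, abs_sub_comm]
  calc |g y - g t| ≤ C * dist y t ^ γ / dist x y ^ β := hreg y t (by rw [mem_ball'] at ht; linarith)
    _ ≤ |C| * dist y t ^ γ / dist x y ^ β := by gcongr; exact le_abs_self C

variable [MeasurableSpace X] [OpensMeasurableSpace X]

theorem mul_setIntegral_le_abs_setIntegral_mul {μ : Measure X} {f : X → ℝ} {y₀ z : X} {r : ℝ}
    (hγ : 0 < γ)
    (hreg : ∀ s t, 2 * dist s t < dist x s → |g s - g t| ≤ C * dist s t ^ γ / dist x s ^ β)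
    (hy₀ : y₀ ∈ ball z r) (hfar : 4 * r ≤ dist x y₀) (hf0 : ∀ y, 0 ≤ f y)
    (hf : IntegrableOn f (ball z r) μ) :
    (|g y₀| - max C 0 * (2 * r) ^ γ / dist x y₀ ^ β) * ∫ y in ball z r, f y ∂μ ≤
      |∫ y in ball z r, g y * f y ∂μ| := by
  have hnear : ∀ y ∈ ball z r, dist y₀ y < 2 * r := fun y hy => by
    have := dist_triangle_right y₀ y z
    rw [mem_ball] at hy hy₀; linarith
  have hcont : ContinuousOn g (ball z r) :=
    (continuousOn_compl_singleton_of_holder hγ hreg).mono fun y hy (hyx : y = x) => by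
      have := hnear y hy
      rw [hyx, dist_comm] at this
      linarith [pos_of_mem_ball hy]
  refine mul_integral_le_abs_integral_mul (hcont.aestronglyMeasurable measurableSet_ball)
    (ae_of_all _ hf0) hf (ae_restrict_of_forall_mem measurableSet_ball fun y hy => ?_)
  rw [abs_sub_comm]
  calc |g y₀ - g y| ≤ C * dist y₀ y ^ γ / dist x y₀ ^ β :=
        hreg y₀ y (by linarith [hnear y hy])
    _ ≤ max C 0 * (2 * r) ^ γ / dist x y₀ ^ β := by
        gcongr
        · exact le_max_left C 0
        · exact (hnear y hy).le

end HolderKernel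

theorem exists_ge_mul_rpow_neg_le (A b : ℝ) {ε γ : ℝ} (hε : 0 < ε) (hγ : 0 < γ) :
    ∃ s, b ≤ s ∧ A * s ^ (-γ) ≤ ε := by
  have hlim := (tendsto_rpow_neg_atTop hγ).const_mul A
  rw [mul_zero] at hlim
  exact ((hlim.eventually (eventually_le_nhds hε)).and (eventually_ge_atTop b)).exists.imp
    fun _ h => h.symm

theorem exists_abs_eq_add_smul_mem_ball {E : Type*} [SeminormedAddCommGroup E] [Module ℝ E]
    {x z u : E} {ρ r : ℝ} (hρ : 0 ≤ ρ) (hx : x ∈ ball (z + ρ • u) r ∨ x ∈ ball (z - ρ • u) r) :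
    ∃ t, |t| = ρ ∧ x + t • u ∈ ball z r := by
  rcases hx with hx | hx
  · refine ⟨-ρ, by rw [abs_neg, abs_of_nonneg hρ], ?_⟩
    rw [mem_ball, dist_eq_norm] at hx ⊢
    convert hx using 2; rw [neg_smul]; abel
  · refine ⟨ρ, abs_of_nonneg hρ, ?_⟩
    rw [mem_ball, dist_eq_norm] at hx ⊢
    convert hx using 2; abel

theorem eq_zero_of_dist_lt_of_mem_ball {X M : Type*} [PseudoMetricSpace X] [Zero M] {f : X → M}
    {x y y₀ z : X} {r : ℝ} (hsupp : ∀ y ∉ ball z r, f y = 0) (hy₀ : y₀ ∈ ball z r)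
    (hfar : 3 * r ≤ dist x y₀) (hy : dist x y < r) : f y = 0 :=
  hsupp y fun hyB => by linarith [dist_triangle4 x y z y₀, mem_ball.1 hyB, mem_ball'.1 hy₀]

theorem mul_rpow_div_mul_rpow_add {a r s β γ : ℝ} (ha : 0 ≤ a) (hr : 0 < r) (hs : 0 < s) :
    (a * r) ^ γ / (r * s) ^ (β + γ) = a ^ γ * s ^ (-γ) * (r * s) ^ (-β) := by
  rw [Real.rpow_add (by positivity), Real.mul_rpow ha hr.le, Real.mul_rpow hr.le hs.le,
    Real.rpow_neg hs.le, Real.rpow_neg (by positivity), Real.mul_rpow hr.le hs.le]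
  field_simp
  rw [Real.mul_rpow hr.le hs.le]
  ring

theorem ballAvg_eq {n : ℕ} (w : En n → ℝ) (z : En n) {r : ℝ} (hr : 0 < r) :
    ballAvg w z r = (r ^ n * volume.real (ball (0 : En n) 1))⁻¹ * ∫ y in ball z r, w y := by
  rw [ballAvg, setAverage_eq, smul_eq_mul, measureReal_def, Measure.addHaar_ball_of_pos volume z hr,
    ENNReal.toReal_mul, ENNReal.toReal_ofReal (by positivity), Module.finrank_fin_fun,
    measureReal_def]

/-- If a Calderón–Zygmund operator `T` on `ℝⁿ` has a kernel `K` satisfying the lower bound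
`|K(x, x + t·u)| ≥ c·|t|^{-n}` along a unit direction `u`, together with the regularity
estimate `|K(x,s) − K(x,t)| ≤ C_K·|s−t|^γ/|x−s|^{n+γ}` for `|x−s| > 2|s−t|`, then `T` is
nondegenerate along the direction `x₀ = s·u` for some `s > 0`. -/
theorem stmt13 (n : ℕ) (T : (En n → ℝ) → (En n → ℝ)) (K : En n → En n → ℝ)
    (u : En n) (hu : ‖u‖ = 1) (c C_K γ : ℝ) (hc : 0 < c) (hγ : 0 < γ)
    (hlow : ∀ (x : En n) (t : ℝ), t ≠ 0 → c * |t| ^ (-(n : ℝ)) ≤ |K x (x + t • u)|)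
    (hreg : ∀ x s t : En n, dist x s > 2 * dist s t →
      |K x s - K x t| ≤ C_K * dist s t ^ γ / dist x s ^ ((n : ℝ) + γ))
    (hrep : ∀ f : En n → ℝ, LocallyIntegrable f volume → ∀ x : En n,
      (∃ ε > 0, ∀ y, dist x y < ε → f y = 0) → T f x = ∫ y, K x y * f y) :
    ∃ s : ℝ, 0 < s ∧ ∃ c' : ℝ, 0 < c' ∧ NondegAlong T (s • u) c' := by
  obtain ⟨s, hs4, hsmall⟩ := exists_ge_mul_rpow_neg_le (max C_K 0 * 2 ^ γ) 4 (half_pos hc) hγ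
  have hs : 0 < s := by linarith
  set V := volume.real (ball (0 : En n) 1)
  have hV : 0 < V :=
    ENNReal.toReal_pos (measure_ball_pos volume 0 one_pos).ne' measure_ball_lt_top.ne
  refine ⟨s, hs, c / 2 * s ^ (-(n : ℝ)) * V, by positivity, ?_⟩
  intro z r hr f hf0 hfloc hsupp x hx
  obtain ⟨t, ht, hy₀⟩ := exists_abs_eq_add_smul_mem_ball (ρ := r * s) (by positivity)
    (by rwa [smul_smul] at hx)
  have hdist : dist x (x + t • u) = r * s := by
    rw [dist_self_add_right, norm_smul, hu, mul_one, Real.norm_eq_abs, ht]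
  have hTf : T f x = ∫ y in ball z r, K x y * f y := by
    have hvan y := eq_zero_of_dist_lt_of_mem_ball (x := x) (y := y) hsupp hy₀ (by nlinarith)
    rw [hrep f hfloc x ⟨r, hr, hvan⟩, setIntegral_eq_integral_of_forall_compl_eq_zero]
    exact fun y hy => by rw [hsupp y hy, mul_zero]
  have hKlow : c * (r * s) ^ (-(n : ℝ)) ≤ |K x (x + t • u)| :=
    ht ▸ hlow x t (abs_pos.1 (by rw [ht]; positivity))
  have hsplit := mul_setIntegral_le_abs_setIntegral_mul (μ := volume) hγ (hreg x) hy₀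
    (by rw [hdist]; nlinarith) hf0
    ((hfloc.integrableOn_isCompact (isCompact_closedBall z r)).mono_set ball_subset_closedBall)
  rw [hdist, mul_div_assoc, mul_rpow_div_mul_rpow_add zero_le_two hr hs, ← mul_assoc,
    ← mul_assoc] at hsplit
  have hI : 0 ≤ ∫ y in ball z r, f y := setIntegral_nonneg measurableSet_ball fun y _ => hf0 y
  rw [hTf, ballAvg_eq f z hr]
  calc c / 2 * s ^ (-(n : ℝ)) * V * ((r ^ n * V)⁻¹ * ∫ y in ball z r, f y)
      = c / 2 * (r * s) ^ (-(n : ℝ)) * ∫ y in ball z r, f y := by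
        rw [Real.mul_rpow hr.le hs.le, Real.rpow_neg hr.le, Real.rpow_natCast]
        field_simp
    _ ≤ (|K x (x + t • u)| - max C_K 0 * 2 ^ γ * s ^ (-γ) * (r * s) ^ (-(n : ℝ))) *
          ∫ y in ball z r, f y := by
        gcongr
        nlinarith [Real.rpow_pos_of_pos (mul_pos hr hs) (-(n : ℝ))]
    _ ≤ _ := hsplit
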